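/- There exists a universal constant c > 0 such that for every function u : V* → ℝ with E(u,u) := sup_n E_n(u,u) < +∞ and all x, y ∈ V* with x ≠ y, one has |u(y) − u(x)| ≤ c · E(u,u)^{1/2} · |y − x|^α, where α = log(5/3)/(2 log 2) and |y − x| is the Euclidean distance in ℝ². -/

import Mathlib

/-!
Every point of `V*` is a vertex `φ_w(a_j)` for words `w` of every sufficiently large length.
Two vertices of a level-`n` cell are joined by an edge of `E_n`, so `u` differs on them by at
most `√(2E) ρⁿ`, where `ρ = √(3/5)`. Following the nested cells of `x` down from level `m` and
summing the geometric series bounds `|u x - u q|` by `√(2E) ρᵐ / (1 - ρ)` for every vertex `q`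
of the level-`m` cell of `x`.

In barycentric coordinates the level-`m` cells are the translates `2⁻ᵐ (K + Δ)` of the standard
simplex `Δ` by integer vectors `K`, and two of them sharing no vertex are at distance at least
`(√3 / 2) 2⁻ᵐ`. So if `|x - y| ≤ 2⁻⁽ᵐ⁺¹⁾`, the level-`m` cells of `x` and `y` share a vertex
and `|u y - u x| ≤ 2 √(2E) ρᵐ / (1 - ρ)`; this is `≲ √E |x - y|^α` because `(1/2)^α = ρ`.
-/

open scoped Classical
open Real Set

noncomputable section

abbrev Pt : Type := ℝ × ℝ

/-- The three corners of the unit triangle. -/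
def sierA : Fin 3 → Pt
  | 0 => (0, 0)
  | 1 => (1 / 2, Real.sqrt 3 / 2)
  | 2 => (1, 0)

/-- The three contractions `φᵢ(x) = (x + aᵢ)/2`. -/
def ctr (i : Fin 3) (x : Pt) : Pt :=
  ((x.1 + (sierA i).1) / 2, (x.2 + (sierA i).2) / 2)

/-- The vertex sets `V n`. -/
def V : ℕ → Finset Pt
  | 0 => {sierA 0, sierA 1, sierA 2}
  | n + 1 => (V n).image (ctr 0) ∪ (V n).image (ctr 1) ∪ (V n).image (ctr 2)

/-- The (ordered) edge sets: `(x, y) ∈ Ed n` iff `{x,y} ∈ E_n`; each undirected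
edge appears with both orientations. -/
def Ed : ℕ → Finset (Pt × Pt)
  | 0 => (V 0 ×ˢ V 0).filter fun p => p.1 ≠ p.2
  | n + 1 => Finset.univ.biUnion fun i : Fin 3 => (Ed n).image fun p => (ctr i p.1, ctr i p.2)

/-- `V* = ⋃ n, V n`. -/
def Vstar : Set Pt := ⋃ n, (V n : Set Pt)

/-- The level-`n` energy `E_n(u,u) = (5/3)^n Σ_{{x,y} ∈ E_n} (u y - u x)²`
(each undirected edge counted once, whence the division by 2). -/
def En (n : ℕ) (u : Pt → ℝ) : ℝ :=
  (5 / 3 : ℝ) ^ n * (∑ p ∈ Ed n, (u p.2 - u p.1) ^ 2) / 2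

/-- The discrete Laplacian `Δ_n u (x) = 5^n Σ_{y ∼ₙ x} (u y - u x)`. -/
def lap (n : ℕ) (u : Pt → ℝ) (x : Pt) : ℝ :=
  (5 : ℝ) ^ n * ∑ p ∈ (Ed n).filter (fun p => p.1 = x), (u p.2 - u p.1)

/-- Euclidean distance in ℝ². -/
def eucl (x y : Pt) : ℝ := Real.sqrt ((y.1 - x.1) ^ 2 + (y.2 - x.2) ^ 2)

namespace Sierpinski

def cellMap (w : List (Fin 3)) (x : Pt) : Pt := w.foldr ctr x

@[simp] lemma cellMap_nil (x : Pt) : cellMap [] x = x := rfl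

@[simp] lemma cellMap_cons (c : Fin 3) (w : List (Fin 3)) (x : Pt) :
    cellMap (c :: w) x = ctr c (cellMap w x) := rfl

lemma cellMap_append (v w : List (Fin 3)) (x : Pt) :
    cellMap (v ++ w) x = cellMap v (cellMap w x) :=
  List.foldr_append

lemma ctr_self (i : Fin 3) : ctr i (sierA i) = sierA i := by
  ext <;> simp only [ctr] <;> ring

lemma cellMap_replicate_sierA (k : ℕ) (j : Fin 3) :
    cellMap (List.replicate k j) (sierA j) = sierA j := by
  induction k with
  | zero => rfl
  | succ k ih => rw [List.replicate_succ, cellMap_cons, ih, ctr_self]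

lemma exists_eq_cellMap_sierA_of_mem_V : ∀ (n : ℕ) {x : Pt}, x ∈ V n →
    ∃ (w : List (Fin 3)) (j : Fin 3), w.length = n ∧ x = cellMap w (sierA j)
  | 0, x, hx => by
    simp only [V, Finset.mem_insert, Finset.mem_singleton] at hx
    rcases hx with rfl | rfl | rfl
    exacts [⟨[], 0, rfl, rfl⟩, ⟨[], 1, rfl, rfl⟩, ⟨[], 2, rfl, rfl⟩]
  | n + 1, x, hx => by
    obtain ⟨i, y, hy, rfl⟩ : ∃ i, ∃ y ∈ V n, ctr i y = x := by
      simp only [V, Finset.mem_union, Finset.mem_image] at hx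
      rcases hx with (h | h) | h
      exacts [⟨0, h⟩, ⟨1, h⟩, ⟨2, h⟩]
    obtain ⟨w, j, hw, rfl⟩ := exists_eq_cellMap_sierA_of_mem_V n hy
    exact ⟨i :: w, j, by simp [hw], rfl⟩

lemma exists_eq_cellMap_append_of_mem_Vstar {x : Pt} (hx : x ∈ Vstar) (m : ℕ) :
    ∃ (v w : List (Fin 3)) (j : Fin 3), v.length = m ∧ x = cellMap (v ++ w) (sierA j) := by
  obtain ⟨_, ⟨n, rfl⟩, hxn⟩ := hx
  obtain ⟨w, j, hw, rfl⟩ := exists_eq_cellMap_sierA_of_mem_V n hxn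
  refine ⟨(w ++ List.replicate m j).take m, (w ++ List.replicate m j).drop m, j, by simp, ?_⟩
  rw [List.take_append_drop, cellMap_append, cellMap_replicate_sierA]

def bary : (Fin 3 → ℝ) →ₗ[ℝ] Pt := Fintype.linearCombination ℝ sierA

lemma bary_single (j : Fin 3) : bary (Pi.single j 1) = sierA j := by
  simp [bary]

lemma ctr_eq_smul (i : Fin 3) (x : Pt) : ctr i x = (1 / 2 : ℝ) • (x + sierA i) := by
  ext <;> simp only [ctr, Prod.smul_fst, Prod.smul_snd, Prod.fst_add, Prod.snd_add, smul_eq_mul] <;>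
    ring

-- In barycentric coordinates `cellMap v` is `l ↦ 2⁻ᵐ (cellOffset v + l)` with `m = v.length`
-- (`cellMap_eq_smul`), so the level-`m` cells are integer translates of `2⁻ᵐ` times the simplex.
def cellOffset : List (Fin 3) → Fin 3 → ℤ
  | [] => 0
  | c :: w => cellOffset w + Pi.single c (2 ^ w.length)

lemma sum_cellOffset (w : List (Fin 3)) : ∑ i, cellOffset w i = 2 ^ w.length - 1 := by
  induction w with
  | nil => simp [cellOffset]
  | cons c w ih =>
    simp only [cellOffset, Pi.add_apply, Finset.sum_add_distrib, ih, Finset.sum_pi_single',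
      Finset.mem_univ, if_true, List.length_cons]
    ring

lemma cellMap_eq_smul (w : List (Fin 3)) (x : Pt) :
    cellMap w x = (1 / 2 : ℝ) ^ w.length • (x + bary fun i => (cellOffset w i : ℝ)) := by
  induction w with
  | nil => simp [cellOffset, ← Pi.zero_def]
  | cons c w ih =>
    have hK : (fun i => (cellOffset (c :: w) i : ℝ)) =
        (fun i => (cellOffset w i : ℝ)) + (2 : ℝ) ^ w.length • Pi.single c 1 := by
      ext i
      by_cases h : i = c <;> simp [cellOffset, h]
    rw [cellMap_cons, ih, ctr_eq_smul, hK, map_add, map_smul, bary_single, List.length_cons]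
    match_scalars <;> simp only [one_div, inv_pow] <;> field_simp <;> ring

lemma cellMap_sierA_eq_smul (w : List (Fin 3)) (a : Fin 3) :
    cellMap w (sierA a) =
      (1 / 2 : ℝ) ^ w.length •
        bary fun i => ((cellOffset w + Pi.single a 1 : Fin 3 → ℤ) i : ℝ) := by
  rw [cellMap_eq_smul, ← bary_single, ← map_add]
  congr 2
  ext i
  by_cases h : i = a <;> simp [h, add_comm]

lemma cellMap_sierA_mem_bary_image (w : List (Fin 3)) (j : Fin 3) :
    cellMap w (sierA j) ∈ bary '' stdSimplex ℝ (Fin 3) := by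
  induction w with
  | nil => exact ⟨Pi.single j 1, single_mem_stdSimplex ℝ j, bary_single j⟩
  | cons c w ih =>
    obtain ⟨l, hl, hwl⟩ := ih
    refine ⟨(1 / 2 : ℝ) • l + (1 / 2 : ℝ) • Pi.single c 1,
      convex_stdSimplex ℝ (Fin 3) hl (single_mem_stdSimplex ℝ c) (by norm_num) (by norm_num)
        (by norm_num), ?_⟩
    rw [cellMap_cons, ← hwl, ctr_eq_smul, map_add, map_smul, map_smul, bary_single, smul_add]

lemma eucl_sq (x y : Pt) : eucl x y ^ 2 = (y.1 - x.1) ^ 2 + (y.2 - x.2) ^ 2 :=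
  Real.sq_sqrt (by positivity)

lemma eucl_pos {x y : Pt} (h : x ≠ y) : 0 < eucl x y := by
  refine Real.sqrt_pos.mpr (lt_of_le_of_ne (by positivity) fun h0 => h ?_)
  obtain ⟨h1, h2⟩ := (add_eq_zero_iff_of_nonneg (sq_nonneg _) (sq_nonneg _)).mp h0.symm
  ext <;> linarith [pow_eq_zero_iff (n := 2) two_ne_zero |>.mp h1,
    pow_eq_zero_iff (n := 2) two_ne_zero |>.mp h2]

lemma eucl_smul_bary_sq (t : ℝ) {p q : Fin 3 → ℝ} (h : ∑ i, p i = ∑ i, q i) :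
    eucl (t • bary p) (t • bary q) ^ 2 = t ^ 2 * (∑ i, (q i - p i) ^ 2) / 2 := by
  have h3 : √3 ^ 2 = 3 := Real.sq_sqrt (by norm_num)
  simp only [Fin.sum_univ_three] at h ⊢
  have hp0 : p 0 = q 0 + q 1 + q 2 - p 1 - p 2 := by linarith
  simp only [eucl_sq, bary, Fintype.linearCombination_apply, sierA, Fin.sum_univ_three, hp0,
    Prod.smul_mk, smul_eq_mul, Prod.mk_add_mk, mul_zero, mul_one, zero_add, add_zero]
  linear_combination (t ^ 2 * (q 1 - p 1) ^ 2 / 4) * h3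

lemma three_halves_mul_sq_le_sum_sq {δ : Fin 3 → ℝ} (h : ∑ i, δ i = 0) (i : Fin 3) :
    3 / 2 * δ i ^ 2 ≤ ∑ k, δ k ^ 2 := by
  rw [Fin.sum_univ_three] at h ⊢
  fin_cases i <;> simp only [Fin.zero_eta, Fin.mk_one, Fin.reduceFinMk] <;>
    nlinarith [sq_nonneg (δ 0 - δ 1), sq_nonneg (δ 1 - δ 2), sq_nonneg (δ 0 - δ 2),
      mul_eq_zero_of_left h (δ 0), mul_eq_zero_of_left h (δ 1), mul_eq_zero_of_left h (δ 2)]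

lemma exists_eq_single_sub_single {D : Fin 3 → ℤ} (hD : ∀ i, |D i| ≤ 1)
    (hs : ∑ i, D i = 0) : ∃ a b, D = Pi.single a 1 - Pi.single b 1 := by
  have hval : ∀ i, D i = -1 ∨ D i = 0 ∨ D i = 1 := fun i => by
    have := abs_le.mp (hD i); omega
  rw [Fin.sum_univ_three] at hs
  have hD : D = ![D 0, D 1, D 2] := by ext i; fin_cases i <;> rfl
  rw [hD]
  rcases hval 0 with h0 | h0 | h0 <;> rcases hval 1 with h1 | h1 | h1 <;>
    rcases hval 2 with h2 | h2 | h2 <;> rw [h0, h1, h2] at hs ⊢ <;>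
    first | omega | decide

lemma exists_add_single_eq_add_single {K K' : Fin 3 → ℤ} (hK : ∑ i, K i = ∑ i, K' i)
    {l l' : Fin 3 → ℝ} (hl : l ∈ stdSimplex ℝ (Fin 3)) (hl' : l' ∈ stdSimplex ℝ (Fin 3))
    (h : ∑ i, ((l' i + K' i) - (l i + K i)) ^ 2 < 3 / 2) :
    ∃ a b, K + Pi.single a 1 = K' + Pi.single b 1 := by
  have hKR : ∑ i, (K i : ℝ) = ∑ i, (K' i : ℝ) := by exact_mod_cast hK
  have hδ : ∑ i, ((l' i + K' i) - (l i + K i)) = 0 := by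
    simp only [Finset.sum_sub_distrib, Finset.sum_add_distrib, hl.2, hl'.2, hKR, sub_self]
  have hD : ∀ i, |K' i - K i| ≤ 1 := fun i => by
    have hsq := (three_halves_mul_sq_le_sum_sq hδ i).trans_lt h
    have hδi := abs_lt.mp (abs_lt_of_sq_lt_sq (a := l' i + K' i - (l i + K i)) (b := 1)
      (by linarith) zero_le_one)
    have hli := mem_Icc_of_mem_stdSimplex hl i
    have hl'i := mem_Icc_of_mem_stdSimplex hl' i
    have hlt : ((K' i - K i : ℤ) : ℝ) < 2 := by push_cast; linarith [hδi.2, hli.2, hl'i.1]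
    have hgt : -2 < ((K' i - K i : ℤ) : ℝ) := by push_cast; linarith [hδi.1, hli.1, hl'i.2]
    have : K' i - K i < 2 := by exact_mod_cast hlt
    have : -2 < K' i - K i := by exact_mod_cast hgt
    rw [abs_le]; omega
  obtain ⟨a, b, hab⟩ :=
    exists_eq_single_sub_single (D := K' - K) hD (by simp [Finset.sum_sub_distrib, hK])
  rw [sub_eq_sub_iff_add_eq_add] at hab
  exact ⟨a, b, by rw [add_comm]; exact hab.symm⟩

def InAdjacentCells (m : ℕ) (x y : Pt) : Prop :=
  ∃ v v' : List (Fin 3), v.length = m ∧ v'.length = m ∧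
    (∃ w j, x = cellMap (v ++ w) (sierA j)) ∧ (∃ w' j', y = cellMap (v' ++ w') (sierA j')) ∧
    ∃ a b, cellMap v (sierA a) = cellMap v' (sierA b)

lemma inAdjacentCells_zero {x y : Pt} (hx : x ∈ Vstar) (hy : y ∈ Vstar) :
    InAdjacentCells 0 x y := by
  obtain ⟨v, w, j, hv, rfl⟩ := exists_eq_cellMap_append_of_mem_Vstar hx 0
  obtain ⟨v', w', j', hv', rfl⟩ := exists_eq_cellMap_append_of_mem_Vstar hy 0
  rw [List.length_eq_zero_iff] at hv hv'
  subst hv hv'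
  exact ⟨[], [], rfl, rfl, ⟨w, j, rfl⟩, ⟨w', j', rfl⟩, 0, 0, rfl⟩

lemma inAdjacentCells_of_eucl_sq_lt {x y : Pt} (hx : x ∈ Vstar) (hy : y ∈ Vstar) {m : ℕ}
    (h : eucl x y ^ 2 < 3 / 4 * (1 / 4) ^ m) : InAdjacentCells m x y := by
  obtain ⟨v, w, j, hv, rfl⟩ := exists_eq_cellMap_append_of_mem_Vstar hx m
  obtain ⟨v', w', j', hv', rfl⟩ := exists_eq_cellMap_append_of_mem_Vstar hy m
  obtain ⟨l, hl, hwl⟩ := cellMap_sierA_mem_bary_image w j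
  obtain ⟨l', hl', hwl'⟩ := cellMap_sierA_mem_bary_image w' j'
  have hK : ∑ i, cellOffset v i = ∑ i, cellOffset v' i := by
    rw [sum_cellOffset, sum_cellOffset, hv, hv']
  have hKR : ∑ i, (cellOffset v i : ℝ) = ∑ i, (cellOffset v' i : ℝ) := by exact_mod_cast hK
  rw [cellMap_append, cellMap_append, ← hwl, ← hwl', cellMap_eq_smul, cellMap_eq_smul, ← map_add,
    ← map_add, hv, hv',
    eucl_smul_bary_sq _ (by simp [Finset.sum_add_distrib, hl.2, hl'.2, hKR])] at h
  have h4 : ((1 / 2 : ℝ) ^ m) ^ 2 = (1 / 4) ^ m := (pow_right_comm _ _ _).trans (by norm_num)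
  simp only [Pi.add_apply, h4] at h
  obtain ⟨a, b, hab⟩ := exists_add_single_eq_add_single hK hl hl'
    (lt_of_mul_lt_mul_right (a := (1 / 4 : ℝ) ^ m) (by linarith) (by positivity))
  refine ⟨v, v', hv, hv', ⟨w, j, rfl⟩, ⟨w', j', rfl⟩, a, b, ?_⟩
  rw [cellMap_sierA_eq_smul, cellMap_sierA_eq_smul, hab, hv, hv']

lemma exists_inAdjacentCells {x y : Pt} (hx : x ∈ Vstar) (hy : y ∈ Vstar) (hxy : x ≠ y) :
    ∃ m : ℕ, (1 / 2 : ℝ) ^ (m + 2) < eucl x y ∧ InAdjacentCells m x y := by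
  have hd := eucl_pos hxy
  by_cases h : eucl x y ≤ 1 / 2
  · obtain ⟨n, hn1, hn2⟩ := exists_nat_pow_near_of_lt_one (by linarith : 0 < 2 * eucl x y)
      (by linarith) (by norm_num : (0 : ℝ) < 1 / 2) (by norm_num)
    refine ⟨n, by rw [pow_succ]; linarith, inAdjacentCells_of_eucl_sq_lt hx hy ?_⟩
    have hsq : eucl x y ^ 2 ≤ ((1 / 2) ^ n / 2) ^ 2 := pow_le_pow_left₀ hd.le (by linarith) 2
    rw [div_pow, pow_right_comm, show (1 / 2 : ℝ) ^ 2 = 1 / 4 by norm_num] at hsq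
    have : (0 : ℝ) < (1 / 4) ^ n := by positivity
    linarith
  · exact ⟨0, by linarith, inAdjacentCells_zero hx hy⟩

def ρ : ℝ := √(3 / 5)

lemma ρ_pos : 0 < ρ := Real.sqrt_pos.mpr (by norm_num)

lemma ρ_sq : ρ ^ 2 = 3 / 5 := Real.sq_sqrt (by norm_num)

lemma ρ_lt_one : ρ < 1 := by nlinarith [ρ_sq, ρ_pos]

lemma half_rpow_eq_ρ : (1 / 2 : ℝ) ^ (Real.log (5 / 3) / (2 * Real.log 2)) = ρ := by
  have h2 : Real.log (1 / 2) = -Real.log 2 := by rw [one_div, Real.log_inv]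
  have h35 : Real.log (3 / 5) = -Real.log (5 / 3) := by rw [← Real.log_inv]; norm_num
  have hl2 : Real.log 2 ≠ 0 := (Real.log_pos one_lt_two).ne'
  rw [ρ, Real.sqrt_eq_rpow, Real.rpow_def_of_pos (by norm_num),
    Real.rpow_def_of_pos (by norm_num), h2, h35]
  field_simp

lemma ρ_pow_lt_rpow {d : ℝ} {k : ℕ} (h : (1 / 2 : ℝ) ^ k < d) :
    ρ ^ k < d ^ (Real.log (5 / 3) / (2 * Real.log 2)) := by
  have hα : 0 < Real.log (5 / 3) / (2 * Real.log 2) :=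
    div_pos (Real.log_pos (by norm_num)) (by linarith [Real.log_pos one_lt_two])
  have := Real.rpow_lt_rpow (by positivity) h hα
  rwa [← Real.rpow_pow_comm (by norm_num), half_rpow_eq_ρ] at this

lemma sierA_mem_V_zero (i : Fin 3) : sierA i ∈ V 0 := by
  fin_cases i <;> simp [V]

lemma sierA_injective : Function.Injective sierA := by
  intro i j h
  fin_cases i <;> fin_cases j <;> simp_all [sierA, Prod.ext_iff]

lemma mem_Ed_cellMap_sierA : ∀ (w : List (Fin 3)) {i j : Fin 3}, i ≠ j →
    (cellMap w (sierA i), cellMap w (sierA j)) ∈ Ed w.length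
  | [], i, j, hij => by
    simp only [Ed, Finset.mem_filter, Finset.mem_product, cellMap_nil, List.length_nil]
    exact ⟨⟨sierA_mem_V_zero i, sierA_mem_V_zero j⟩, sierA_injective.ne hij⟩
  | c :: w, i, j, hij => by
    simp only [List.length_cons, Ed, Finset.mem_biUnion]
    exact ⟨c, Finset.mem_univ c, Finset.mem_image_of_mem _ (mem_Ed_cellMap_sierA w hij)⟩

lemma En_nonneg (n : ℕ) (u : Pt → ℝ) : 0 ≤ En n u := by
  unfold En
  have : 0 ≤ ∑ p ∈ Ed n, (u p.2 - u p.1) ^ 2 := Finset.sum_nonneg fun p _ => sq_nonneg _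
  positivity

section Energy

variable {u : Pt → ℝ} {S : ℝ}

lemma abs_sub_le_of_mem_Ed (hS : ∀ n, En n u ≤ S) {n : ℕ} {p : Pt × Pt} (hp : p ∈ Ed n) :
    |u p.2 - u p.1| ≤ √(2 * S) * ρ ^ n := by
  have hS0 : 0 ≤ S := (En_nonneg 0 u).trans (hS 0)
  have hsum : (u p.2 - u p.1) ^ 2 ≤ ∑ q ∈ Ed n, (u q.2 - u q.1) ^ 2 :=
    Finset.single_le_sum (f := fun q : Pt × Pt => (u q.2 - u q.1) ^ 2) (fun q _ => sq_nonneg _) hp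
  have hEn : ∑ q ∈ Ed n, (u q.2 - u q.1) ^ 2 = 2 * (3 / 5) ^ n * En n u := by
    have h1 : (3 / 5 : ℝ) ^ n * (5 / 3) ^ n = 1 := by rw [← mul_pow]; norm_num
    unfold En
    linear_combination (-∑ q ∈ Ed n, (u q.2 - u q.1) ^ 2) * h1
  apply abs_le_of_sq_le_sq _ (mul_nonneg (Real.sqrt_nonneg _) (pow_nonneg ρ_pos.le _))
  rw [mul_pow, Real.sq_sqrt (by positivity), ← pow_mul, mul_comm n, pow_mul, ρ_sq]
  nlinarith [hS n, pow_pos (show (0 : ℝ) < 3 / 5 by norm_num) n]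

lemma abs_sub_cellMap_sierA_le (hS : ∀ n, En n u ≤ S) (w : List (Fin 3)) (i j : Fin 3) :
    |u (cellMap w (sierA j)) - u (cellMap w (sierA i))| ≤ √(2 * S) * ρ ^ w.length := by
  rcases eq_or_ne i j with rfl | hij
  · rw [sub_self, abs_zero]
    exact mul_nonneg (Real.sqrt_nonneg _) (pow_nonneg ρ_pos.le _)
  · exact abs_sub_le_of_mem_Ed hS (mem_Ed_cellMap_sierA w hij)

lemma abs_sub_cellMap_append_le (hS : ∀ n, En n u ≤ S) (v w : List (Fin 3)) (i j : Fin 3) :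
    |u (cellMap (v ++ w) (sierA j)) - u (cellMap v (sierA i))| ≤
      √(2 * S) * ρ ^ v.length / (1 - ρ) := by
  have hρ : 0 < 1 - ρ := sub_pos.mpr ρ_lt_one
  induction w generalizing v i with
  | nil =>
    rw [List.append_nil]
    exact (abs_sub_cellMap_sierA_le hS v i j).trans <|
      le_div_self (mul_nonneg (Real.sqrt_nonneg _) (pow_nonneg ρ_pos.le _)) hρ (by linarith [ρ_pos])
  | cons c w ih =>
    have hcorner : cellMap (v ++ [c]) (sierA c) = cellMap v (sierA c) := by
      rw [cellMap_append, cellMap_cons, cellMap_nil, ctr_self]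
    have h1 := ih (v ++ [c]) c
    rw [List.append_assoc, List.singleton_append, hcorner, List.length_append,
      List.length_singleton, pow_succ] at h1
    have h2 := abs_sub_cellMap_sierA_le hS v i c
    calc |u (cellMap (v ++ c :: w) (sierA j)) - u (cellMap v (sierA i))|
        ≤ |u (cellMap (v ++ c :: w) (sierA j)) - u (cellMap v (sierA c))| +
            |u (cellMap v (sierA c)) - u (cellMap v (sierA i))| := abs_sub_le _ _ _
      _ ≤ √(2 * S) * (ρ ^ v.length * ρ) / (1 - ρ) +
            √(2 * S) * ρ ^ v.length := add_le_add h1 h2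
      _ = √(2 * S) * ρ ^ v.length / (1 - ρ) := by field_simp; ring

lemma InAdjacentCells.abs_sub_le (hS : ∀ n, En n u ≤ S) {m : ℕ} {x y : Pt}
    (h : InAdjacentCells m x y) :
    |u y - u x| ≤ 2 * √(2 * S) * ρ ^ m / (1 - ρ) := by
  obtain ⟨v, v', hv, hv', ⟨w, j, rfl⟩, ⟨w', j', rfl⟩, a, b, hab⟩ := h
  have hx := abs_sub_cellMap_append_le hS v w a j
  have hy := abs_sub_cellMap_append_le hS v' w' b j'
  rw [hv] at hx
  rw [hv', ← hab] at hy
  calc |u (cellMap (v' ++ w') (sierA j')) - u (cellMap (v ++ w) (sierA j))|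
      ≤ |u (cellMap (v' ++ w') (sierA j')) - u (cellMap v (sierA a))| +
          |u (cellMap v (sierA a)) - u (cellMap (v ++ w) (sierA j))| := _root_.abs_sub_le _ _ _
    _ ≤ √(2 * S) * ρ ^ m / (1 - ρ) + √(2 * S) * ρ ^ m / (1 - ρ) :=
        add_le_add hy ((abs_sub_comm _ _).trans_le hx)
    _ = 2 * √(2 * S) * ρ ^ m / (1 - ρ) := by ring

end Energy


end Sierpinski

open Sierpinski

/-- Hölder estimate: there is a universal constant `c > 0` such that for every
`u : V* → ℝ` with `E(u,u) = sup_n E_n(u,u) < ∞` and all distinct `x, y ∈ V*`,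
`|u y − u x| ≤ c E(u,u)^{1/2} |y − x|^α` with `α = log(5/3)/(2 log 2)`. -/
theorem holder_estimate :
    ∃ c : ℝ, 0 < c ∧
      ∀ u : Pt → ℝ, BddAbove (Set.range fun n => En n u) →
        ∀ x ∈ Vstar, ∀ y ∈ Vstar, x ≠ y →
          |u y - u x| ≤
            c * Real.sqrt (sSup (Set.range fun n => En n u)) *
              eucl x y ^ (Real.log (5 / 3) / (2 * Real.log 2)) := by
  have hρ : 0 < 1 - ρ := sub_pos.mpr ρ_lt_one
  refine ⟨2 * √2 / ((1 - ρ) * ρ ^ 2), div_pos (by positivity) (mul_pos hρ (pow_pos ρ_pos 2)),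
    fun u hbdd x hx y hy hxy => ?_⟩
  set S := sSup (Set.range fun n => En n u)
  have hS : ∀ n, En n u ≤ S := fun n => le_csSup hbdd ⟨n, rfl⟩
  obtain ⟨m, hdm, hcells⟩ := exists_inAdjacentCells hx hy hxy
  calc |u y - u x| ≤ 2 * √(2 * S) * ρ ^ m / (1 - ρ) := hcells.abs_sub_le hS
    _ = 2 * √2 / ((1 - ρ) * ρ ^ 2) * √S * ρ ^ (m + 2) := by
        rw [Real.sqrt_mul zero_le_two]; field_simp [ρ_pos.ne']; ring
    _ ≤ _ := by gcongr; exact (ρ_pow_lt_rpow hdm).le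

end
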